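/- For the Markov chain X̃ with transition probabilities p_x, r_x, q_x as above, started at x > k ≥ 1, the probability of ever hitting k equals h(k)/h(x), where h(y) = y(y+1)(y+2)(y+3)(2y+3). -/
import Mathlib


open Filter Topology

noncomputable def p (x : ℕ) : ℝ :=
  ((x : ℝ) + 4) * (2 * x + 5) / (3 * ((x : ℝ) + 2) * (2 * x + 3))

noncomputable def r (x : ℕ) : ℝ :=
  (x : ℝ) * ((x : ℝ) + 3) / (3 * ((x : ℝ) + 1) * ((x : ℝ) + 2))

noncomputable def q (x : ℕ) : ℝ :=
  ((x : ℝ) - 1) * (2 * x + 1) / (3 * ((x : ℝ) + 1) * (2 * x + 3))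

noncomputable def h (y : ℝ) : ℝ := y * (y + 1) * (y + 2) * (y + 3) * (2 * y + 3)

/-- `H k n x` is the probability that the chain `X̃` started at `x` hits `k`
within `n` steps. -/
noncomputable def H (k : ℕ) : ℕ → ℕ → ℝ
  | 0, x => if x = k then 1 else 0
  | n + 1, x =>
    if x = k then 1 else p x * H k n (x + 1) + r x * H k n x + q x * H k n (x - 1)

namespace Stmt5Aux

lemma p_pos (x : ℕ) : 0 < p x := by
  have hx : (0:ℝ) ≤ (x:ℝ) := Nat.cast_nonneg x
  unfold p; positivity

lemma r_nonneg (x : ℕ) : 0 ≤ r x := by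
  have hx : (0:ℝ) ≤ (x:ℝ) := Nat.cast_nonneg x
  unfold r; positivity

lemma q_nonneg {x : ℕ} (hx : 1 ≤ x) : 0 ≤ q x := by
  have hx' : (1:ℝ) ≤ (x:ℝ) := by exact_mod_cast hx
  unfold q
  apply div_nonneg
  · nlinarith
  · nlinarith

lemma q_pos {x : ℕ} (hx : 2 ≤ x) : 0 < q x := by
  have hx' : (2:ℝ) ≤ (x:ℝ) := by exact_mod_cast hx
  unfold q
  apply div_pos
  · nlinarith
  · nlinarith

lemma h_pos {y : ℝ} (hy : 0 < y) : 0 < h y := by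
  unfold h
  have h1 : 0 < y + 1 := by linarith
  have h2 : 0 < y + 2 := by linarith
  have h3 : 0 < y + 3 := by linarith
  have h4 : 0 < 2 * y + 3 := by linarith
  positivity

lemma h_pos_nat {x : ℕ} (hx : 1 ≤ x) : 0 < h x := by
  apply h_pos
  exact_mod_cast hx

lemma h_ge_nat (x : ℕ) : (x : ℝ) ≤ h x := by
  have hc : (0:ℝ) ≤ (x:ℝ) := Nat.cast_nonneg x
  unfold h
  have m1 : (1:ℝ) ≤ ((x:ℝ) + 1) * ((x:ℝ) + 2) := by nlinarith
  have m2 : (1:ℝ) ≤ ((x:ℝ) + 3) * (2 * (x:ℝ) + 3) := by nlinarith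
  have m3 : (1:ℝ) ≤ (((x:ℝ) + 1) * ((x:ℝ) + 2)) * (((x:ℝ) + 3) * (2 * (x:ℝ) + 3)) := by
    nlinarith [m1, m2]
  nlinarith [mul_le_mul_of_nonneg_left m3 hc]

lemma prq_sum (x : ℕ) : p x + r x + q x = 1 := by
  have hx : (0:ℝ) ≤ (x:ℝ) := Nat.cast_nonneg x
  unfold p r q
  have d1 : (3 * ((x : ℝ) + 2) * (2 * (x:ℝ) + 3)) ≠ 0 := by positivity
  have d2 : (3 * ((x : ℝ) + 1) * ((x:ℝ) + 2)) ≠ 0 := by positivity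
  have d3 : (3 * ((x : ℝ) + 1) * (2 * (x:ℝ) + 3)) ≠ 0 := by positivity
  field_simp
  ring

/-- Harmonicity of `y ↦ 1 / h y` away from the boundary. -/
lemma harm {x : ℕ} (hx2 : 2 ≤ x) :
    p x * (1 / h ((x + 1 : ℕ))) + r x * (1 / h x) + q x * (1 / h ((x - 1 : ℕ)))
      = 1 / h x := by
  have h1 : (1:ℕ) ≤ x := le_trans (by norm_num) hx2
  have hc : ((x - 1 : ℕ) : ℝ) = (x : ℝ) - 1 := by
    push_cast [Nat.cast_sub h1]; ring
  have hb : (2:ℝ) ≤ (x:ℝ) := by exact_mod_cast hx2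
  rw [hc]
  push_cast
  unfold p r q h
  have n0 : (x:ℝ) - 1 ≠ 0 := by intro hh; nlinarith
  have n1 : (x:ℝ) ≠ 0 := by intro hh; nlinarith
  have n2 : (x:ℝ) + 1 ≠ 0 := by intro hh; nlinarith
  have n3 : (x:ℝ) + 2 ≠ 0 := by intro hh; nlinarith
  have n4 : (x:ℝ) + 3 ≠ 0 := by intro hh; nlinarith
  have n5 : (x:ℝ) + 4 ≠ 0 := by intro hh; nlinarith
  have n6 : 2 * (x:ℝ) + 1 ≠ 0 := by intro hh; nlinarith
  have n7 : 2 * (x:ℝ) + 3 ≠ 0 := by intro hh; nlinarith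
  have n8 : 2 * (x:ℝ) + 5 ≠ 0 := by intro hh; nlinarith
  have n9 : 2 * ((x:ℝ) - 1) + 3 ≠ 0 := by intro hh; nlinarith
  have n10 : 2 * ((x:ℝ) + 1) + 3 ≠ 0 := by intro hh; nlinarith
  have n11 : (x:ℝ) - 1 + 1 ≠ 0 := by intro hh; nlinarith
  have n12 : (x:ℝ) - 1 + 2 ≠ 0 := by intro hh; nlinarith
  have n13 : (x:ℝ) - 1 + 3 ≠ 0 := by intro hh; nlinarith
  have n14 : (x:ℝ) + 1 + 1 ≠ 0 := by intro hh; nlinarith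
  have n15 : (x:ℝ) + 1 + 2 ≠ 0 := by intro hh; nlinarith
  have n16 : (x:ℝ) + 1 + 3 ≠ 0 := by intro hh; nlinarith
  field_simp
  ring

/-- Harmonicity of `g y = h k / h y`. -/
lemma harm_g (k : ℕ) {x : ℕ} (hx2 : 2 ≤ x) :
    p x * (h k / h ((x + 1 : ℕ))) + r x * (h k / h x) + q x * (h k / h ((x - 1 : ℕ)))
      = h k / h x := by
  have := harm hx2
  have e : ∀ y : ℝ, h k / y = h k * (1 / y) := by intro y; ring
  simp only [e]
  calc p x * ((h k) * (1 / h ((x + 1 : ℕ)))) + r x * ((h k) * (1 / h x))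
        + q x * ((h k) * (1 / h ((x - 1 : ℕ))))
      = (h k) * (p x * (1 / h ((x + 1 : ℕ))) + r x * (1 / h x)
          + q x * (1 / h ((x - 1 : ℕ)))) := by ring
    _ = (h k) * (1 / h x) := by rw [this]

lemma H_zero (k x : ℕ) : H k 0 x = if x = k then 1 else 0 := rfl

lemma H_succ (k n x : ℕ) (hne : x ≠ k) :
    H k (n + 1) x = p x * H k n (x + 1) + r x * H k n x + q x * H k n (x - 1) := by
  simp [H, hne]

lemma H_at_k (k n : ℕ) : H k n k = 1 := by
  cases n <;> simp [H]

lemma H_nonneg {k : ℕ} (hk : 1 ≤ k) : ∀ n x, k ≤ x → 0 ≤ H k n x := by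
  intro n
  induction n with
  | zero =>
      intro x hx
      rw [H_zero]
      split <;> norm_num
  | succ n ih =>
      intro x hx
      by_cases hxe : x = k
      · rw [hxe, H_at_k]; norm_num
      · have hx1 : k + 1 ≤ x := lt_of_le_of_ne hx (Ne.symm hxe)
        rw [H_succ k n x hxe]
        have hkx1 : k ≤ x + 1 := by omega
        have hkxm : k ≤ x - 1 := by omega
        have hq : 0 ≤ q x := q_nonneg (by omega)
        have := ih (x + 1) hkx1
        have := ih x hx
        have := ih (x - 1) hkxm
        have hp := (p_pos x).le
        have hr := r_nonneg x
        positivity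

lemma H_mono {k : ℕ} (hk : 1 ≤ k) : ∀ n x, k ≤ x → H k n x ≤ H k (n + 1) x := by
  intro n
  induction n with
  | zero =>
      intro x hx
      by_cases hxe : x = k
      · rw [hxe, H_at_k, H_at_k]
      · rw [H_zero, if_neg hxe]
        exact H_nonneg hk 1 x hx
  | succ n ih =>
      intro x hx
      by_cases hxe : x = k
      · rw [hxe, H_at_k, H_at_k]
      · have hx1 : k + 1 ≤ x := lt_of_le_of_ne hx (Ne.symm hxe)
        rw [H_succ k n x hxe, H_succ k (n + 1) x hxe]
        have hq : 0 ≤ q x := q_nonneg (by omega)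
        have hp := (p_pos x).le
        have hr := r_nonneg x
        have i1 := ih (x + 1) (by omega)
        have i2 := ih x hx
        have i3 := ih (x - 1) (by omega)
        gcongr

lemma H_le_g {k : ℕ} (hk : 1 ≤ k) : ∀ n x, k ≤ x → H k n x ≤ h k / h x := by
  have hhk : 0 < h k := h_pos_nat hk
  intro n
  induction n with
  | zero =>
      intro x hx
      rw [H_zero]
      by_cases hxe : x = k
      · rw [if_pos hxe, hxe, div_self hhk.ne']
      · rw [if_neg hxe]
        exact (div_pos hhk (h_pos_nat (le_trans hk hx))).le
  | succ n ih =>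
      intro x hx
      by_cases hxe : x = k
      · rw [hxe, H_at_k, div_self hhk.ne']
      · have hx1 : k + 1 ≤ x := lt_of_le_of_ne hx (Ne.symm hxe)
        have hx2 : 2 ≤ x := by omega
        rw [H_succ k n x hxe]
        have hq : 0 ≤ q x := q_nonneg (by omega)
        have hp := (p_pos x).le
        have hr := r_nonneg x
        have i1 := ih (x + 1) (by omega)
        have i2 := ih x hx
        have i3 := ih (x - 1) (by omega)
        calc p x * H k n (x + 1) + r x * H k n x + q x * H k n (x - 1)
            ≤ p x * (h k / h ((x + 1 : ℕ))) + r x * (h k / h x)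
              + q x * (h k / h ((x - 1 : ℕ))) := by gcongr
          _ = h k / h x := harm_g k hx2

noncomputable def L (k x : ℕ) : ℝ := ⨆ n, H k n x

lemma H_bdd {k : ℕ} (hk : 1 ≤ k) {x : ℕ} (hx : k ≤ x) :
    BddAbove (Set.range fun n => H k n x) := by
  refine ⟨h k / h x, ?_⟩
  rintro y ⟨n, rfl⟩
  exact H_le_g hk n x hx

lemma L_tendsto {k : ℕ} (hk : 1 ≤ k) {x : ℕ} (hx : k ≤ x) :
    Tendsto (fun n => H k n x) atTop (𝓝 (L k x)) := by
  apply tendsto_atTop_ciSup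
  · exact monotone_nat_of_le_succ (fun n => H_mono hk n x hx)
  · exact H_bdd hk hx

lemma L_le_g {k : ℕ} (hk : 1 ≤ k) {x : ℕ} (hx : k ≤ x) : L k x ≤ h k / h x :=
  ciSup_le (fun n => H_le_g hk n x hx)

lemma L_nonneg {k : ℕ} (hk : 1 ≤ k) {x : ℕ} (hx : k ≤ x) : 0 ≤ L k x :=
  le_trans (H_nonneg hk 0 x hx) (le_ciSup (H_bdd hk hx) 0)

lemma L_at_k (k : ℕ) : L k k = 1 := by
  unfold L
  have : (fun n => H k n k) = fun _ => (1 : ℝ) := funext (fun n => H_at_k k n)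
  rw [this, ciSup_const]

lemma L_harm {k : ℕ} (hk : 1 ≤ k) {x : ℕ} (hx : k < x) :
    L k x = p x * L k (x + 1) + r x * L k x + q x * L k (x - 1) := by
  have hxe : x ≠ k := by omega
  have t1 := L_tendsto hk (show k ≤ x + 1 by omega)
  have t0 := L_tendsto hk (show k ≤ x by omega)
  have tm := L_tendsto hk (show k ≤ x - 1 by omega)
  have t0' : Tendsto (fun n => H k (n + 1) x) atTop (𝓝 (L k x)) :=
    t0.comp (tendsto_add_atTop_nat 1)
  have heq : (fun n => H k (n + 1) x)
      = fun n => p x * H k n (x + 1) + r x * H k n x + q x * H k n (x - 1) :=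
    funext (fun n => H_succ k n x hxe)
  rw [heq] at t0'
  have t2 : Tendsto (fun n => p x * H k n (x + 1) + r x * H k n x + q x * H k n (x - 1))
      atTop (𝓝 (p x * L k (x + 1) + r x * L k x + q x * L k (x - 1))) :=
    (((tendsto_const_nhds.mul t1).add (tendsto_const_nhds.mul t0)).add
      (tendsto_const_nhds.mul tm))
  exact tendsto_nhds_unique t0' t2

/-- The defect function. -/
noncomputable def u (k y : ℕ) : ℝ := h k / h y - L k y

lemma u_at_k {k : ℕ} (hk : 1 ≤ k) : u k k = 0 := by
  unfold u
  rw [L_at_k, div_self (h_pos_nat hk).ne']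
  ring

lemma u_nonneg {k : ℕ} (hk : 1 ≤ k) {y : ℕ} (hy : k ≤ y) : 0 ≤ u k y := by
  have := L_le_g hk hy; unfold u; linarith

lemma u_le_g {k : ℕ} (hk : 1 ≤ k) {y : ℕ} (hy : k ≤ y) : u k y ≤ h k / h y := by
  have := L_nonneg hk hy; unfold u; linarith

lemma u_rel {k : ℕ} (hk : 1 ≤ k) {x : ℕ} (hx : k + 1 ≤ x) :
    p x * (u k (x + 1) - u k x) = q x * (u k x - u k (x - 1)) := by
  have hx2 : 2 ≤ x := by omega
  have hA := harm_g k hx2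
  have hB := L_harm hk (show k < x by omega)
  have hS := prq_sum x
  unfold u
  linear_combination hA + hB - (h k / h x - L k x) * hS

lemma u_step {k : ℕ} (hk : 1 ≤ k) : ∀ m, u k (k + m) ≤ u k (k + m + 1) := by
  intro m
  induction m with
  | zero =>
      have h0 := u_at_k hk
      have h1 := u_nonneg hk (show k ≤ k + 0 + 1 by omega)
      simpa [h0] using h1
  | succ m ih =>
      have hx : k + 1 ≤ k + m + 1 := by omega
      have hrel := u_rel hk hx
      have hsub : k + m + 1 - 1 = k + m := by omega
      rw [hsub] at hrel
      have hq : 0 ≤ q (k + m + 1) := q_nonneg (by omega)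
      have hp := p_pos (k + m + 1)
      have hge : 0 ≤ q (k + m + 1) * (u k (k + m + 1) - u k (k + m)) := by
        apply mul_nonneg hq; linarith
      rw [← hrel] at hge
      show u k (k + m + 1) ≤ u k (k + m + 1 + 1)
      nlinarith [hge, hp]

lemma u_mono {k : ℕ} (hk : 1 ≤ k) : ∀ m, u k (k + 1) ≤ u k (k + m + 1) := by
  intro m
  induction m with
  | zero => exact le_refl _
  | succ m ih => exact le_trans ih (u_step hk (m + 1))

lemma u_k1_zero {k : ℕ} (hk : 1 ≤ k) : u k (k + 1) = 0 := by
  have hnn : 0 ≤ u k (k + 1) := u_nonneg hk (by omega)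
  rcases eq_or_lt_of_le hnn with he | hpos
  · exact he.symm
  · exfalso
    obtain ⟨N, hN⟩ := exists_nat_gt (h k / u k (k + 1))
    have hle : u k (k + 1) ≤ u k (k + N + 1) := u_mono hk N
    have hub : u k (k + N + 1) ≤ h k / h ((k + N + 1 : ℕ)) := u_le_g hk (by omega)
    have hy : 0 < h ((k + N + 1 : ℕ)) := h_pos_nat (by omega)
    have hgeN : (N : ℝ) ≤ h ((k + N + 1 : ℕ)) := by
      have := h_ge_nat (k + N + 1)
      have hcast : (N : ℝ) ≤ ((k + N + 1 : ℕ) : ℝ) := by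
        push_cast; linarith [Nat.cast_nonneg (α := ℝ) k]
      linarith
    have hhk : 0 < h k := h_pos_nat hk
    -- h k / u(k+1) < N ≤ h(k+N+1), so h k / h(k+N+1) < u(k+1)
    have hlt : h k / h ((k + N + 1 : ℕ)) < u k (k + 1) := by
      rw [div_lt_iff₀ hy]
      have h1 : h k / u k (k + 1) < h ((k + N + 1 : ℕ)) := lt_of_lt_of_le hN hgeN
      rw [div_lt_iff₀ hpos] at h1
      linarith [mul_comm (u k (k + 1)) (h ((k + N + 1 : ℕ)))]
    linarith

lemma u_zero {k : ℕ} (hk : 1 ≤ k) : ∀ m, u k (k + m) = 0 ∧ u k (k + m + 1) = 0 := by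
  intro m
  induction m with
  | zero => exact ⟨u_at_k hk, u_k1_zero hk⟩
  | succ m ih =>
      obtain ⟨h0, h1⟩ := ih
      refine ⟨h1, ?_⟩
      show u k (k + m + 1 + 1) = 0
      have hrel := u_rel hk (show k + 1 ≤ k + m + 1 by omega)
      have hsub : k + m + 1 - 1 = k + m := by omega
      rw [hsub, h0, h1] at hrel
      have hp := p_pos (k + m + 1)
      have h2 : p (k + m + 1) * (u k (k + m + 1 + 1) - 0) = 0 := by rw [hrel]; ring
      rcases mul_eq_zero.1 h2 with hl | hr
      · exact absurd hl hp.ne'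
      · linarith

end Stmt5Aux

/-- Started at `x > k ≥ 1`, the chain `X̃` ever hits `k` with probability
`h(k)/h(x)` where `h(y) = y(y+1)(y+2)(y+3)(2y+3)`. -/
theorem stmt_5 (k x : ℕ) (hk : 1 ≤ k) (hx : k < x) :
    Tendsto (fun n => H k n x) atTop (𝓝 (h k / h x)) := by
  have hL : Stmt5Aux.L k x = h k / h x := by
    have := (Stmt5Aux.u_zero hk (x - k)).1
    have hxx : k + (x - k) = x := by omega
    rw [hxx] at this
    unfold Stmt5Aux.u at this
    linarith
  have := Stmt5Aux.L_tendsto hk (le_of_lt hx)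
  rwa [hL] at this
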